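/- Let q and g be primitive words and u a nonempty word with u not a power of q. If u q^m = g^k for some positive integers m, k, then g ≠ q and |g| > |q^(m-1)| = (m-1)|q|. -/
import Mathlib


variable {A : Type*}

/-- k-fold concatenation of a word with itself. -/
def pw (w : List A) : ℕ → List A
  | 0 => []
  | n + 1 => w ++ pw w n

/-- A nonempty word is primitive if it is not a proper power. -/
def Primitive (w : List A) : Prop :=
  w ≠ [] ∧ ∀ (v : List A) (m : ℕ), w = pw v m → m = 1

theorem pw_length (w : List A) : ∀ n, (pw w n).length = n * w.length
  | 0 => by simp [pw]
  | n + 1 => by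
    simp only [pw, List.length_append, pw_length w n, Nat.succ_mul]
    ring

theorem pw_add (w : List A) (a b : ℕ) : pw w (a + b) = pw w a ++ pw w b := by
  induction a with
  | zero => simp [pw]
  | succ a ih =>
    have : a + 1 + b = (a + b) + 1 := by omega
    rw [this]
    show w ++ pw w (a + b) = (w ++ pw w a) ++ pw w b
    rw [ih, List.append_assoc]

theorem pw_one (w : List A) : pw w 1 = w := by simp [pw]

theorem mod_sub_self {i p : ℕ} (h : p ≤ i) : (i - p) % p = i % p := by
  conv_rhs => rw [show i = (i - p) + p by omega]
  rw [Nat.add_mod_right]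

theorem pw_getElem? (w : List A) : ∀ n i, i < n * w.length →
    (pw w n)[i]? = w[i % w.length]?
  | 0, i, h => by omega
  | n + 1, i, h => by
    by_cases hi : i < w.length
    · rw [show pw w (n+1) = w ++ pw w n from rfl, List.getElem?_append_left hi,
        Nat.mod_eq_of_lt hi]
    · push_neg at hi
      rw [show pw w (n+1) = w ++ pw w n from rfl, List.getElem?_append_right hi,
        pw_getElem? w n (i - w.length) (by
          have hs : (n + 1) * w.length = n * w.length + w.length := by ring
          omega),
        mod_sub_self hi]

/-- `f` has period `p` on the first `L` positions. -/
def Per (f : ℕ → Option A) (L p : ℕ) : Prop := ∀ i, i + p < L → f i = f (i + p)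

/-- `f` is constant on residue classes mod `d` within the first `L` positions. -/
def EqMod (f : ℕ → Option A) (L d : ℕ) : Prop :=
  ∀ i j, i < L → j < L → i % d = j % d → f i = f j

theorem per_mod {f : ℕ → Option A} {L p : ℕ} (hp : 0 < p) (h : Per f L p) :
    ∀ i, i < L → f i = f (i % p) := by
  intro i
  induction i using Nat.strong_induction_on with
  | _ i ih =>
    intro hi
    rcases lt_or_ge i p with h' | h'
    · rw [Nat.mod_eq_of_lt h']
    · have e := h (i - p) (by omega)
      rw [Nat.sub_add_cancel h'] at e
      rw [← e, ih (i - p) (by omega) (by omega), mod_sub_self h']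

theorem fw_aux : ∀ n p s L (f : ℕ → Option A), p + s ≤ n → 0 < p → p ≤ s →
    p + s ≤ L → Per f L p → Per f L s → EqMod f L (Nat.gcd p s) := by
  intro n
  induction n with
  | zero => intro p s L f hn hp; omega
  | succ n ih =>
    intro p s L f hn hp hps hL hfp hfs
    rcases eq_or_lt_of_le hps with he | hlt
    · subst he
      rw [Nat.gcd_self]
      intro i j hi hj hmod
      rw [per_mod hp hfp i hi, per_mod hp hfp j hj, hmod]
    · have hs' : 0 < s - p := by omega
      have hfp' : Per f (L - p) p := fun i h2 => hfp i (by omega)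
      have hfs' : Per f (L - p) (s - p) := by
        intro i h2
        have h1 : f i = f (i + s) := hfs i (by omega)
        have h2' : f (i + (s - p)) = f (i + (s - p) + p) := hfp (i + (s - p)) (by omega)
        rw [h1, h2']
        congr 1
        omega
      have key : EqMod f (L - p) (Nat.gcd p s) := by
        rcases le_or_gt p (s - p) with hord | hord
        · have := ih p (s - p) (L - p) f (by omega) hp hord (by omega) hfp' hfs'
          rwa [Nat.gcd_sub_self_right (le_of_lt hlt)] at this
        · have := ih (s - p) p (L - p) f (by omega) hs' (le_of_lt hord) (by omega) hfs' hfp'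
          rw [Nat.gcd_comm] at this
          rwa [Nat.gcd_sub_self_right (le_of_lt hlt)] at this
      intro i j hi hj hmod
      have hd : Nat.gcd p s ∣ p := Nat.gcd_dvd_left p s
      rw [per_mod hp hfp i hi, per_mod hp hfp j hj]
      refine key (i % p) (j % p) (by have := Nat.mod_lt i hp; omega)
        (by have := Nat.mod_lt j hp; omega) ?_
      rw [Nat.mod_mod_of_dvd _ hd, Nat.mod_mod_of_dvd _ hd, hmod]

theorem fw {p s L : ℕ} (f : ℕ → Option A) (hp : 0 < p) (hs : 0 < s)
    (hL : p + s ≤ L) (h1 : Per f L p) (h2 : Per f L s) :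
    EqMod f L (Nat.gcd p s) := by
  rcases le_total p s with hle | hle
  · exact fw_aux (p + s) p s L f le_rfl hp hle hL h1 h2
  · have := fw_aux (p + s) s p L f (by omega) hs hle (by omega) h2 h1
    rwa [Nat.gcd_comm] at this

theorem lentin_schutzenberger_shyr (u g q : List A) (hu : u ≠ [])
    (hq : Primitive q) (hg : Primitive g)
    (hnp : ∀ n : ℕ, 0 < n → u ≠ pw q n)
    (m k : ℕ) (hm : 0 < m) (hk : 0 < k)
    (h : u ++ pw q m = pw g k) :
    g ≠ q ∧ g.length > (m - 1) * q.length := by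
  have hql : 0 < q.length := List.length_pos_iff.mpr hq.1
  have hgl : 0 < g.length := List.length_pos_iff.mpr hg.1
  have hul : 0 < u.length := List.length_pos_iff.mpr hu
  -- If `u ++ q^m` were a power of `q`, then `u` would be a power of `q`.
  have contra : ∀ N, u ++ pw q m = pw q N → False := by
    intro N hN
    have hlen : u.length + m * q.length = N * q.length := by
      have := congrArg List.length hN
      simpa [pw_length] using this
    have hNm : m < N := by
      by_contra h'
      push_neg at h'
      have : N * q.length ≤ m * q.length := Nat.mul_le_mul_right _ h'
      omega
    have hsplit : pw q N = pw q (N - m) ++ pw q m := by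
      rw [← pw_add]
      congr 1
      omega
    rw [hsplit] at hN
    have : u = pw q (N - m) := List.append_inj_left' hN rfl
    exact hnp (N - m) (by omega) this
  constructor
  · intro heq
    rw [heq] at h
    exact contra k h
  · by_contra hc
    push_neg at hc
    -- hc : g.length ≤ (m - 1) * q.length
    have hsum : g.length + q.length ≤ m * q.length := by
      have e : ((m - 1) + 1) * q.length = (m - 1) * q.length + q.length :=
        Nat.succ_mul _ _
      rw [Nat.sub_add_cancel hm] at e
      omega
    have hWl : u.length + m * q.length = k * g.length := by
      have := congrArg List.length h
      simpa [pw_length] using this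
    set f : ℕ → Option A := fun i => (pw q m)[i]? with hf
    have hperq : Per f (m * q.length) q.length := by
      intro i hi
      show (pw q m)[i]? = (pw q m)[i + q.length]?
      rw [pw_getElem? q m i (by omega), pw_getElem? q m (i + q.length) hi,
        Nat.add_mod_right]
    have hperg : Per f (m * q.length) g.length := by
      intro i hi
      have e1 : (u ++ pw q m)[u.length + i]? = (pw q m)[i]? := by
        rw [List.getElem?_append_right (by omega)]
        congr 1
        omega
      have e2 : (u ++ pw q m)[u.length + (i + g.length)]? = (pw q m)[i + g.length]? := by
        rw [List.getElem?_append_right (by omega)]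
        congr 1
        omega
      have p1 : (pw g k)[u.length + i]? = g[(u.length + i) % g.length]? :=
        pw_getElem? g k _ (by omega)
      have p2 : (pw g k)[u.length + (i + g.length)]? =
          g[(u.length + (i + g.length)) % g.length]? :=
        pw_getElem? g k _ (by omega)
      show (pw q m)[i]? = (pw q m)[i + g.length]?
      rw [← e1, ← e2, h, p1, p2]
      congr 1
      rw [show u.length + (i + g.length) = (u.length + i) + g.length by omega,
        Nat.add_mod_right]
    have hEq : EqMod f (m * q.length) (Nat.gcd g.length q.length) :=
      fw f hgl hql hsum hperg hperq
    set d := Nat.gcd g.length q.length with hdd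
    have hdq : d ∣ q.length := Nat.gcd_dvd_right _ _
    have hd_pos : 0 < d := Nat.gcd_pos_of_pos_left _ hgl
    have hd_le : d ≤ q.length := Nat.le_of_dvd hql hdq
    have len_t : (q.take d).length = d := by
      rw [List.length_take]
      omega
    have hfq : ∀ i, i < q.length → f i = q[i]? := by
      intro i hi
      show (pw q m)[i]? = q[i]?
      rw [pw_getElem? q m i (by calc i < q.length := hi
            _ ≤ m * q.length := Nat.le_mul_of_pos_left _ hm),
        Nat.mod_eq_of_lt hi]
    have hq_eq : q = pw (q.take d) (q.length / d) := by
      apply List.ext_getElem?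
      intro i
      by_cases hi : i < q.length
      · rw [pw_getElem? (q.take d) _ i (by
          rw [len_t, Nat.div_mul_cancel hdq]; exact hi), len_t,
          List.getElem?_take, if_pos (Nat.mod_lt _ hd_pos)]
        have hmlt : i % d < q.length := lt_of_lt_of_le (Nat.mod_lt _ hd_pos) hd_le
        rw [← hfq i hi, ← hfq (i % d) hmlt]
        exact hEq i (i % d) (by omega) (by omega) (Nat.mod_mod_of_dvd i dvd_rfl).symm
      · push_neg at hi
        rw [List.getElem?_eq_none (by omega), List.getElem?_eq_none (by
          rw [pw_length, len_t, Nat.div_mul_cancel hdq]; omega)]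
    have hd_eq : d = q.length := by
      have h1 := hq.2 (q.take d) (q.length / d) hq_eq
      have h2 : q.length = d := by
        rw [← Nat.div_mul_cancel hdq, h1, one_mul]
      omega
    have hdvd_g : q.length ∣ g.length := hd_eq ▸ Nat.gcd_dvd_left _ _
    set t := g.length / q.length with htt
    have ht_mul : t * q.length = g.length := Nat.div_mul_cancel hdvd_g
    have ht_len : (pw q t).length = g.length := by rw [pw_length, ht_mul]
    have ht_le : t ≤ m - 1 := by
      have : t * q.length ≤ (m - 1) * q.length := by omega
      exact Nat.le_of_mul_le_mul_right this hql
    have hw_split : pw q m = pw q (m - t) ++ pw q t := by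
      rw [← pw_add]
      congr 1
      omega
    have hk_split : pw g k = pw g (k - 1) ++ g := by
      conv_lhs => rw [show k = (k - 1) + 1 by omega, pw_add, pw_one]
    have e1 : pw g (k - 1) ++ g = (u ++ pw q (m - t)) ++ pw q t := by
      rw [← hk_split, ← h, hw_split, List.append_assoc]
    have hgt : g = pw q t := List.append_inj_right' e1 ht_len.symm
    have ht1 : t = 1 := hg.2 q t hgt
    rw [ht1, pw_one] at hgt
    rw [hgt] at h
    exact contra k h
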